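/- Let r = [1, r_2, ..., r_n] be a 1-regular continued fraction with r_i = ±1 and n ≥ 2. Then r > 0, and moreover r > 1 if and only if r_2 = 1. -/

import Mathlib

/-!
Normalise by the sign of the leading entry: for entries `±1`,
`[a, b, …] · a = 1 + a b / ([b, …] · b)`. By induction the normalised value `y` of every
tail is positive, so equal leading signs give a value `1 + 1/y > 1`. At a sign change
`a b = -1`, 1-regularity forces the next tail to start with two equal signs, so there
`y > 1` and the value `1 - 1/y` lies in `(0, 1)`.
-/

/-- Evaluation of a finite continued fraction `[a₁, a₂, …, aₙ] = a₁ + 1/(a₂ + 1/(⋯ + 1/aₙ))`. -/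
def cf : List ℤ → ℚ
  | [] => 0
  | a :: l => a + (cf l)⁻¹

/-- A continued fraction `[a₁, …, aₙ]` is 1-regular: all entries are nonzero,
`a_{n-1} aₙ > 0`, and there are no two consecutive sign changes. -/
def OneRegular (l : List ℤ) : Prop :=
  (∀ a ∈ l, a ≠ 0) ∧
  (2 ≤ l.length → 0 < l[l.length - 2]! * l[l.length - 1]!) ∧
  (∀ i, i + 2 < l.length → l[i]! * l[i + 1]! < 0 → 0 < l[i + 1]! * l[i + 2]!)

namespace OneRegular

theorem tail {a : ℤ} {t : List ℤ} (h : OneRegular (a :: t)) : OneRegular t := by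
  obtain ⟨hne, hlast, hchange⟩ := h
  refine ⟨fun x hx => hne x (List.mem_cons_of_mem _ hx), fun hlen => ?_, fun i hi => ?_⟩
  · obtain ⟨n, hn⟩ : ∃ n, t.length = n + 2 := ⟨t.length - 2, by omega⟩
    simpa [hn] using hlast (by simp; omega)
  · simpa using hchange (i + 1) (by simp; omega)

theorem mul_pos_of_pair {a b : ℤ} (h : OneRegular [a, b]) : 0 < a * b := by
  simpa using h.2.1 (by simp)

theorem mul_pos_of_mul_neg {a b c : ℤ} {t : List ℤ} (h : OneRegular (a :: b :: c :: t))
    (hab : a * b < 0) : 0 < b * c := by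
  simpa using h.2.2 0 (by simp) (by simpa using hab)

end OneRegular

theorem Int.eq_of_mul_pos_of_eq_one_or_neg_one {a b : ℤ} (ha : a = 1 ∨ a = -1)
    (hb : b = 1 ∨ b = -1) (h : 0 < a * b) : b = a := by
  rcases ha with rfl | rfl <;> rcases hb with rfl | rfl <;> simp_all

theorem cf_cons_cons_mul_head {a b : ℤ} (ha : a = 1 ∨ a = -1) (hb : b = 1 ∨ b = -1)
    (t : List ℤ) : cf (a :: b :: t) * a = 1 + a * b * (cf (b :: t) * b)⁻¹ := by
  change (a + (cf (b :: t))⁻¹ : ℚ) * a = _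
  generalize cf (b :: t) = x
  rcases ha with rfl | rfl <;> rcases hb with rfl | rfl <;> push_cast <;> ring

theorem cf_mul_head_pos_and_one_lt_iff (t : List ℤ) {a b : ℤ}
    (hpm : ∀ e ∈ a :: b :: t, e = 1 ∨ e = -1) (hreg : OneRegular (a :: b :: t)) :
    0 < cf (a :: b :: t) * a ∧ (1 < cf (a :: b :: t) * a ↔ b = a) := by
  have ha := hpm a (by simp)
  have hb := hpm b (by simp)
  rw [cf_cons_cons_mul_head ha hb]
  induction t generalizing a b with
  | nil =>
    obtain rfl := Int.eq_of_mul_pos_of_eq_one_or_neg_one ha hb hreg.mul_pos_of_pair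
    rcases ha with rfl | rfl <;> norm_num [cf]
  | cons c t ih =>
    have hc := hpm c (by simp)
    obtain ⟨hy, hy_one_lt⟩ :=
      ih (fun e he => hpm e (List.mem_cons_of_mem _ he)) hreg.tail hb hc
    rw [← cf_cons_cons_mul_head hb hc] at hy hy_one_lt
    set y := cf (b :: c :: t) * b
    by_cases hba : b = a
    · subst hba
      have hbb : (b : ℚ) * b = 1 := by rcases hb with rfl | rfl <;> norm_num
      simp only [hbb, one_mul, iff_true]
      have := inv_pos.mpr hy
      constructor <;> linarith
    · have hab : a * b = -1 := by
        rcases ha with rfl | rfl <;> rcases hb with rfl | rfl <;> simp_all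
      have hcb : c = b := Int.eq_of_mul_pos_of_eq_one_or_neg_one hb hc
        (hreg.mul_pos_of_mul_neg (by omega))
      have hy1 : 1 < y := hy_one_lt.mpr hcb
      have := inv_lt_one_of_one_lt₀ hy1
      have := inv_pos.mpr hy
      simp only [← Int.cast_mul, hab, hba, iff_false]
      constructor <;> linarith

theorem one_regular_pos_and_gt_one_iff (l : List ℤ) (hn : 2 ≤ l.length)
    (h1 : l[0]! = 1) (hpm : ∀ e ∈ l, e = 1 ∨ e = -1) (hreg : OneRegular l) :
    0 < cf l ∧ (1 < cf l ↔ l[1]! = 1) := by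
  obtain ⟨a, b, t, rfl⟩ : ∃ a b t, l = a :: b :: t := by
    match l, hn with
    | a :: b :: t, _ => exact ⟨a, b, t, rfl⟩
  obtain rfl : a = 1 := by simpa using h1
  simpa using cf_mul_head_pos_and_one_lt_iff t hpm hreg
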